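/- Let k be a positive integer, x a real number with |kx| < 1, and s a complex number with Re(s) > 2. Then ζ(s) · Σ_{n=1}^∞ (n·N_k(x:n))/n^s = ζ(s−1) · Li_s(kx), where ζ is the Riemann zeta function and Li_s(z) := Σ_{n=1}^∞ z^n/n^s. (The series Σ_{n=1}^∞ (n·N_k(x:n))/n^s converges absolutely for Re(s) > 2.) -/

import Mathlib

open scoped BigOperators

/-- `N_k(x : n) = (1/n) * ∑_{d ∣ n} φ(n/d) k^d x^d`. -/
noncomputable def Nk (k : ℕ) (x : ℝ) (n : ℕ) : ℝ :=
  (1 / (n : ℝ)) * ∑ d ∈ n.divisors, (Nat.totient (n / d) : ℝ) * (k : ℝ) ^ d * x ^ d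

/-- The polylogarithm `Li_s(z) = ∑_{n ≥ 1} z^n / n^s`. -/
noncomputable def Li (s z : ℂ) : ℂ := ∑' n : ℕ, z ^ (n + 1) / ((n + 1 : ℕ) : ℂ) ^ s

/-!
Since `∑_{d ∣ n} φ(n/d) (kx)^d` is a Dirichlet convolution, `n · N_k(x:n) = (φ ⍟ (kx)^·)(n)`, and
its L-series factors as `L(φ, s) · Li_s(kx)`. Gauss' identity `∑_{d ∣ n} φ(d) = n` says
`1 ⍟ φ = id`, hence `ζ(s) L(φ, s) = L(id, s) = ζ(s - 1)`. Absolute convergence for `Re s > 2`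
comes from `φ(n) ≤ n` and `|kx| < 1`.
-/

open LSeries
open scoped LSeries.notation

lemma LSeries_eq_tsum_add_one (f : ℕ → ℂ) (s : ℂ) :
    LSeries f s = ∑' n : ℕ, f (n + 1) / ((n + 1 : ℕ) : ℂ) ^ s := by
  rw [LSeries, ← Nat.succ_injective.tsum_eq (f := term f s)]
  · exact tsum_congr fun n ↦ term_of_ne_zero n.succ_ne_zero f s
  · rintro (_ | n) hn
    · exact absurd (term_zero f s) hn
    · exact ⟨n, rfl⟩

lemma LSeries_natCast_mul (f : ℕ → ℂ) (s : ℂ) :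
    LSeries (fun n ↦ n * f n) s = LSeries f (s - 1) := by
  refine tsum_congr fun n ↦ ?_
  rcases eq_or_ne n 0 with rfl | hn
  · simp
  have hn' : (n : ℂ) ≠ 0 := Nat.cast_ne_zero.mpr hn
  rw [term_of_ne_zero hn, term_of_ne_zero hn, Complex.cpow_sub _ _ hn', Complex.cpow_one,
    div_div_eq_mul_div, mul_comm]

lemma LSeries_pow_eq_Li (s z : ℂ) : LSeries (z ^ ·) s = Li s z :=
  LSeries_eq_tsum_add_one _ s

lemma LSeriesSummable_pow {z s : ℂ} (hz : ‖z‖ ≤ 1) (hs : 1 < s.re) :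
    LSeriesSummable (z ^ ·) s :=
  LSeriesSummable_of_bounded_of_one_lt_re (m := 1)
    (fun n _ ↦ by simpa only [norm_pow] using pow_le_one₀ (norm_nonneg z) hz) hs

lemma LSeriesSummable_totient {s : ℂ} (hs : 2 < s.re) :
    LSeriesSummable (fun n ↦ (n.totient : ℂ)) s := by
  refine LSeriesSummable_of_le_const_mul_rpow hs ⟨1, fun n _ ↦ ?_⟩
  rw [Complex.norm_natCast, one_mul, show (2 : ℝ) - 1 = 1 by norm_num, Real.rpow_one]
  exact_mod_cast n.totient_le

lemma one_convolution_totient {R : Type*} [Semiring R] :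
    (1 : ℕ → R) ⍟ (fun n ↦ (n.totient : R)) = fun n : ℕ ↦ (n : R) := by
  ext n
  rw [convolution_def]
  simp only [Pi.one_apply, one_mul]
  rw [Nat.sum_divisorsAntidiagonal (f := fun _ b ↦ (b.totient : R)),
    Nat.sum_div_divisors n (fun m ↦ (m.totient : R)), ← Nat.cast_sum, Nat.sum_totient]

lemma riemannZeta_mul_LSeries_totient {s : ℂ} (hs : 2 < s.re) :
    riemannZeta s * LSeries (fun n ↦ (n.totient : ℂ)) s = riemannZeta (s - 1) := by
  have hs1 : 1 < s.re := by linarith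
  have hs1' : 1 < (s - 1).re := by rw [Complex.sub_re, Complex.one_re]; linarith
  rw [← LSeries_one_eq_riemannZeta hs1,
    ← LSeries_convolution' (LSeriesSummable_one_iff.mpr hs1) (LSeriesSummable_totient hs),
    one_convolution_totient, ← LSeries_one_eq_riemannZeta hs1', ← LSeries_natCast_mul]
  simp only [Pi.one_apply, mul_one]

lemma natCast_mul_Nk_eq_convolution (k : ℕ) (x : ℝ) (n : ℕ) :
    (n : ℂ) * (Nk k x n : ℂ) =
      ((fun m ↦ (m.totient : ℂ)) ⍟ fun m ↦ (((k : ℝ) * x : ℝ) : ℂ) ^ m) n := by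
  rcases eq_or_ne n 0 with rfl | hn
  · simp
  rw [convolution_def]
  beta_reduce
  rw [Nat.sum_divisorsAntidiagonal'
    (f := fun a b ↦ (a.totient : ℂ) * (((k : ℝ) * x : ℝ) : ℂ) ^ b), Nk]
  push_cast
  rw [← mul_assoc, mul_one_div_cancel (Nat.cast_ne_zero.mpr hn), one_mul]
  simp only [mul_pow, mul_assoc]

theorem stmt7_general (k : ℕ) (x : ℝ) (hx : |(k : ℝ) * x| < 1)
    (s : ℂ) (hs : 2 < s.re) :
    Summable (fun n : ℕ =>
      ‖(((n + 1 : ℕ) : ℂ) * ((Nk k x (n + 1) : ℝ) : ℂ)) / ((n + 1 : ℕ) : ℂ) ^ s‖) ∧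
    riemannZeta s *
        ∑' n : ℕ, (((n + 1 : ℕ) : ℂ) * ((Nk k x (n + 1) : ℝ) : ℂ)) / ((n + 1 : ℕ) : ℂ) ^ s
      = riemannZeta (s - 1) * Li s (((k : ℝ) * x : ℝ) : ℂ) := by
  have hz : ‖(((k : ℝ) * x : ℝ) : ℂ)‖ ≤ 1 := by
    rw [Complex.norm_real, Real.norm_eq_abs]
    exact hx.le
  have hφ := LSeriesSummable_totient hs
  have hpow := LSeriesSummable_pow hz (by linarith)
  simp_rw [natCast_mul_Nk_eq_convolution]
  refine ⟨?_, ?_⟩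
  · simpa only [term_of_ne_zero (Nat.succ_ne_zero _)] using
      (summable_nat_add_iff 1).mpr (hφ.convolution hpow).norm
  · rw [← LSeries_eq_tsum_add_one, LSeries_convolution' hφ hpow, ← mul_assoc,
      riemannZeta_mul_LSeries_totient hs, LSeries_pow_eq_Li]

theorem stmt7 (k : ℕ) (hk : 0 < k) (x : ℝ) (hx : |(k : ℝ) * x| < 1)
    (s : ℂ) (hs : 2 < s.re) :
    Summable (fun n : ℕ =>
      ‖(((n + 1 : ℕ) : ℂ) * ((Nk k x (n + 1) : ℝ) : ℂ)) / ((n + 1 : ℕ) : ℂ) ^ s‖) ∧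
    riemannZeta s *
        ∑' n : ℕ, (((n + 1 : ℕ) : ℂ) * ((Nk k x (n + 1) : ℝ) : ℂ)) / ((n + 1 : ℕ) : ℂ) ^ s
      = riemannZeta (s - 1) * Li s (((k : ℝ) * x : ℝ) : ℂ) :=
  stmt7_general k x hx s hs
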